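/- Let q ∈ ℂ be nonzero and not a root of unity, and let p ∈ ℂ[[X]] satisfy constantCoeff p = 0 and coeff 1 p = q. For natural numbers m and j ≥ 1, let {q}_{m,j} ∈ ℂ[x] denote the polynomial x^m · Π_{i=0}^{j−1} (x − q^i). Then for all natural numbers n, j with j ≥ 1 and n ≥ j + 1, the coefficient coeff j (p^{∘n}) of the n-th compositional iterate of p satisfies coeff j (p^{∘n}) = ({q}_{n−j,j}(q^j) / ({q}_{n−j,j}).coeff n) · ( Σ_{l=n−j−1}^{n−1} ((({q}_{n−j−1,j}).coeff l) / {q}_{n−j−1,j}(q^j)) · coeff j (p^{∘l}) − Σ_{l=n−j}^{n−1} ((({q}_{n−j,j}).coeff l) / {q}_{n−j,j}(q^j)) · coeff j (p^{∘l}) ). -/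

import Mathlib

open PowerSeries
open Polynomial

/-- Composition of formal power series: `psComp g h = g ∘ h`, with
`coeff j (g ∘ h) = ∑_{l=0}^{j} (coeff l g) * (coeff j (h^l))`. -/
noncomputable def psComp (g h : PowerSeries ℂ) : PowerSeries ℂ :=
  PowerSeries.mk fun j =>
    ∑ l ∈ Finset.range (j + 1), (coeff l g) * (coeff j (h ^ l))


/-- Compositional iterates: `psIter p 0 = X`, `psIter p (i+1) = p ∘ (psIter p i)`. -/
noncomputable def psIter (p : PowerSeries ℂ) : ℕ → PowerSeries ℂ
  | 0 => PowerSeries.X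
  | i + 1 => psComp p (psIter p i)


/-- The polynomial `{q}_{m,j} = x^m * ∏_{i=0}^{j-1} (x - q^i)`. -/
noncomputable def qPochPoly (q : ℂ) (m j : ℕ) : Polynomial ℂ :=
  Polynomial.X ^ m * ∏ i ∈ Finset.range j, (Polynomial.X - Polynomial.C (q ^ i))

lemma coeff_psComp (g h : PowerSeries ℂ) (j : ℕ) :
    coeff j (psComp g h) = ∑ l ∈ Finset.range (j + 1), (coeff l g) * (coeff j (h ^ l)) := by
  simp [psComp, coeff_mk]

lemma constCoeff_psIter (p : PowerSeries ℂ) (hp0 : constantCoeff p = 0) (n : ℕ) :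
    coeff 0 (psIter p n) = 0 := by
  induction n with
  | zero => simp [psIter]
  | succ n ih =>
    rw [psIter, coeff_psComp]
    simp [coeff_zero_eq_constantCoeff, hp0]

lemma zero_of_X_dvd_deg0 (Q : Polynomial ℂ) (h1 : Polynomial.X ∣ Q) (h2 : Q.natDegree ≤ 0) : Q = 0 := by
  have h0 : Q.coeff 0 = 0 := X_dvd_iff.mp h1
  have := Polynomial.eq_C_of_natDegree_le_zero h2
  rw [this, h0, map_zero]

lemma exists_poly (q : ℂ) (hq0 : q ≠ 0) (hq1 : ∀ k : ℕ, 0 < k → q ^ k ≠ 1)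
    (p : PowerSeries ℂ) (hp0 : constantCoeff p = 0) (hp1 : coeff 1 p = q) (k : ℕ) :
    ∃ Q : Polynomial ℂ, Polynomial.X ∣ Q ∧ Q.natDegree ≤ k ∧
      ∀ n, coeff k (psIter p n) = Q.eval (q ^ n) := by
  induction k using Nat.strong_induction_on with
  | _ k IH =>
  rcases Nat.eq_zero_or_pos k with rfl | hk
  · exact ⟨0, dvd_zero _, by simp, fun n => by simp [constCoeff_psIter p hp0 n]⟩
  -- totalize IH
  have IH' : ∀ m, ∃ Q : Polynomial ℂ, Polynomial.X ∣ Q ∧ Q.natDegree ≤ m ∧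
      (m < k → ∀ n, coeff m (psIter p n) = Q.eval (q ^ n)) := by
    intro m
    by_cases h : m < k
    · obtain ⟨Q, h1, h2, h3⟩ := IH m h
      exact ⟨Q, h1, h2, fun _ => h3⟩
    · exact ⟨0, dvd_zero _, by simp, fun hm => absurd hm h⟩
  choose Qf hQdvd hQdeg hQeval using IH'
  have hQ0 : Qf 0 = 0 := zero_of_X_dvd_deg0 _ (hQdvd 0) (hQdeg 0)
  -- powers
  have pow : ∀ l, 1 ≤ l → ∀ v, v ≤ k → (v < k ∨ 2 ≤ l) →
      ∃ G : Polynomial ℂ, Polynomial.X ^ (min l 2) ∣ G ∧ G.natDegree ≤ v ∧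
        ∀ n, coeff v ((psIter p n) ^ l) = G.eval (q ^ n) := by
    intro l hl
    induction l, hl using Nat.le_induction with
    | base =>
      intro v hv hcond
      have hvk : v < k := by omega
      refine ⟨Qf v, ?_, hQdeg v, fun n => by simpa using hQeval v hvk n⟩
      simpa using hQdvd v
    | succ l hl ihl =>
      -- totalize ihl
      have ihl' : ∀ w, ∃ G : Polynomial ℂ, Polynomial.X ^ (min l 2) ∣ G ∧ G.natDegree ≤ w ∧
          ((w ≤ k ∧ (w < k ∨ 2 ≤ l)) → ∀ n, coeff w ((psIter p n) ^ l) = G.eval (q ^ n)) := by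
        intro w
        by_cases h : w ≤ k ∧ (w < k ∨ 2 ≤ l)
        · obtain ⟨G, h1, h2, h3⟩ := ihl w h.1 h.2
          exact ⟨G, h1, h2, fun _ => h3⟩
        · exact ⟨0, dvd_zero _, by simp, fun hw => absurd hw h⟩
      choose Gf hGdvd hGdeg hGeval using ihl'
      have hG0 : Gf 0 = 0 := by
        apply zero_of_X_dvd_deg0 _ _ (hGdeg 0)
        exact dvd_trans (dvd_pow_self _ (by omega : min l 2 ≠ 0)) (hGdvd 0)
      intro v hv hcond
      refine ⟨∑ uw ∈ Finset.HasAntidiagonal.antidiagonal v, Qf uw.1 * Gf uw.2, ?_, ?_, ?_⟩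
      · apply Finset.dvd_sum
        intro uw _
        have h1 : Polynomial.X ∣ Qf uw.1 := hQdvd uw.1
        have h2 : Polynomial.X ^ (min l 2) ∣ Gf uw.2 := hGdvd uw.2
        calc Polynomial.X ^ (min (l+1) 2) ∣ Polynomial.X ^ (1 + min l 2) :=
              pow_dvd_pow _ (by omega)
          _ = Polynomial.X ^ 1 * Polynomial.X ^ (min l 2) := by rw [pow_add]
          _ ∣ Qf uw.1 * Gf uw.2 := mul_dvd_mul (by simpa using h1) h2
      · apply Polynomial.natDegree_sum_le_of_forall_le
        intro uw huw
        have := Finset.HasAntidiagonal.antidiagonal.fst_le huw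
        have huv : uw.1 + uw.2 = v := Finset.HasAntidiagonal.mem_antidiagonal.mp huw
        calc (Qf uw.1 * Gf uw.2).natDegree ≤ (Qf uw.1).natDegree + (Gf uw.2).natDegree :=
              natDegree_mul_le
          _ ≤ uw.1 + uw.2 := add_le_add (hQdeg _) (hGdeg _)
          _ = v := huv
      · intro n
        rw [pow_succ', PowerSeries.coeff_mul, Polynomial.eval_finset_sum]
        apply Finset.sum_congr rfl
        intro uw huw
        have huv : uw.1 + uw.2 = v := Finset.HasAntidiagonal.mem_antidiagonal.mp huw
        rw [Polynomial.eval_mul]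
        rcases Nat.eq_zero_or_pos uw.1 with hu0 | hu1
        · rw [hu0, hQ0, constCoeff_psIter p hp0 n]
          simp
        rcases Nat.eq_zero_or_pos uw.2 with hw0 | hw1
        · have h00 : coeff 0 ((psIter p n) ^ l) = 0 := by
            rw [coeff_zero_eq_constantCoeff, map_pow, ← coeff_zero_eq_constantCoeff,
              constCoeff_psIter p hp0 n, zero_pow (by omega : l ≠ 0)]
          rw [hw0, hG0, h00]
          simp
        have hu : uw.1 < k := by omega
        have hw : uw.2 < k := by omega
        rw [hQeval uw.1 hu n, hGeval uw.2 ⟨by omega, Or.inl hw⟩ n]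
  -- powers at v = k, guarded by 2 ≤ l
  have pw : ∀ l, ∃ G : Polynomial ℂ, Polynomial.X ^ 2 ∣ G ∧ G.natDegree ≤ k ∧
      (2 ≤ l → ∀ n, coeff k ((psIter p n) ^ l) = G.eval (q ^ n)) := by
    intro l
    by_cases h : 2 ≤ l
    · obtain ⟨G, h1, h2, h3⟩ := pow l (by omega) k le_rfl (Or.inr h)
      rw [min_eq_right h] at h1
      exact ⟨G, h1, h2, fun _ => h3⟩
    · exact ⟨0, dvd_zero _, by simp, fun hl => absurd hl h⟩
  choose Gf2 hG2dvd hG2deg hG2eval using pw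
  set Gs : Polynomial ℂ := ∑ l ∈ Finset.Icc 2 k, Polynomial.C (coeff l p) * Gf2 l with hGs
  have hGsdvd : Polynomial.X ^ 2 ∣ Gs := Finset.dvd_sum fun l _ => (hG2dvd l).mul_left _
  have hGsdeg : Gs.natDegree ≤ k := natDegree_sum_le_of_forall_le _ _ fun l _ =>
    (natDegree_C_mul_le _ _).trans (hG2deg l)
  have hrec : ∀ n, coeff k (psIter p (n+1)) = q * coeff k (psIter p n) + Gs.eval (q ^ n) := by
    intro n
    rw [show psIter p (n+1) = psComp p (psIter p n) from rfl, coeff_psComp]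
    have hsplit : Finset.range (k + 1) = insert 0 (insert 1 (Finset.Icc 2 k)) := by
      ext x; simp; omega
    rw [hsplit, Finset.sum_insert (by simp), Finset.sum_insert (by simp)]
    have h0 : coeff 0 p = 0 := by rw [coeff_zero_eq_constantCoeff]; exact hp0
    rw [h0, zero_mul, zero_add, hp1, pow_one, hGs, eval_finset_sum]
    congr 1
    apply Finset.sum_congr rfl
    intro l hl
    rw [eval_mul, eval_C, hG2eval l (Finset.mem_Icc.mp hl).1 n]
  -- solving the recurrence
  have hq1' : ∀ i, 2 ≤ i → q ^ i - q ≠ 0 := by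
    intro i hi h
    have h2 : q ^ i = q := sub_eq_zero.mp h
    have h3 : q ^ (i-1) * q = 1 * q := by
      rw [one_mul, ← pow_succ, show i - 1 + 1 = i by omega]; exact h2
    exact hq1 (i-1) (by omega) (mul_right_cancel₀ hq0 h3)
  set D : Polynomial ℂ := ∑ i ∈ Finset.Icc 2 k,
      Polynomial.C (Gs.coeff i / (q ^ i - q)) * Polynomial.X ^ i with hD
  have hGscoeff : ∀ i, i ∉ Finset.Icc 2 k → Gs.coeff i = 0 := by
    intro i hi
    simp only [Finset.mem_Icc, not_and, not_le] at hi
    rcases lt_or_ge i 2 with h2 | h2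
    · obtain ⟨R, hR⟩ := hGsdvd
      rw [hR, mul_comm, Polynomial.coeff_mul_X_pow']
      simp [show ¬ 2 ≤ i by omega]
    · exact coeff_eq_zero_of_natDegree_lt (by have := hGsdeg; omega)
  have hGseval : ∀ x : ℂ, Gs.eval x = ∑ i ∈ Finset.Icc 2 k, Gs.coeff i * x ^ i := by
    intro x
    rw [eval_eq_sum_range' (lt_of_le_of_lt hGsdeg (Nat.lt_succ_self k))]
    refine (Finset.sum_subset ?_ ?_).symm
    · intro i hi; simp only [Finset.mem_Icc] at hi; simp; omega
    · intro i _ hi; rw [hGscoeff i hi, zero_mul]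
  have hDeval : ∀ x : ℂ, D.eval x = ∑ i ∈ Finset.Icc 2 k, (Gs.coeff i / (q ^ i - q)) * x ^ i := by
    intro x; rw [hD, eval_finset_sum]; simp
  have hDstep : ∀ n : ℕ, D.eval (q ^ (n+1)) = q * D.eval (q ^ n) + Gs.eval (q ^ n) := by
    intro n
    rw [hDeval, hDeval, hGseval, Finset.mul_sum, ← Finset.sum_add_distrib]
    apply Finset.sum_congr rfl
    intro i hi
    have hne := hq1' i (Finset.mem_Icc.mp hi).1
    have hc : Gs.coeff i / (q ^ i - q) * (q ^ i - q) = Gs.coeff i := div_mul_cancel₀ _ hne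
    rw [pow_succ', mul_pow]
    linear_combination ((q:ℂ)^n)^i * hc
  set c0 : ℂ := coeff k (psIter p 0) - D.eval 1 with hc0
  refine ⟨D + Polynomial.C c0 * Polynomial.X, ?_, ?_, ?_⟩
  · apply dvd_add
    · rw [Polynomial.X_dvd_iff, hD, finset_sum_coeff]
      apply Finset.sum_eq_zero
      intro i hi
      rw [Polynomial.coeff_C_mul, Polynomial.coeff_X_pow]
      have := (Finset.mem_Icc.mp hi).1
      simp [show ¬ (0 = i) by omega]
    · exact Dvd.intro_left _ rfl
  · apply natDegree_add_le_of_degree_le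
    · apply natDegree_sum_le_of_forall_le
      intro i hi
      exact (natDegree_C_mul_le _ _).trans (by simp [(Finset.mem_Icc.mp hi).2])
    · exact (natDegree_C_mul_le _ _).trans (by rw [natDegree_X]; omega)
  · intro n
    induction n with
    | zero =>
      simp only [pow_zero, eval_add, eval_mul, eval_C, eval_X, hc0]
      ring
    | succ n ih =>
      rw [hrec n, ih]
      simp only [eval_add, eval_mul, eval_C, eval_X]
      rw [hDstep n, pow_succ]
      ring


lemma qPoch_monic (q : ℂ) (m j : ℕ) : (qPochPoly q m j).Monic :=
  (monic_X_pow m).mul (monic_prod_of_monic _ _ fun i _ => monic_X_sub_C _)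

lemma qPoch_natDegree (q : ℂ) (m j : ℕ) : (qPochPoly q m j).natDegree = m + j := by
  rw [qPochPoly, Polynomial.Monic.natDegree_mul (monic_X_pow m)
    (monic_prod_of_monic _ _ fun i _ => monic_X_sub_C _), natDegree_X_pow]
  congr 1
  rw [Polynomial.natDegree_prod_of_monic _ _ fun i _ => monic_X_sub_C _]
  have h1 : ∀ x ∈ Finset.range j, (Polynomial.X - Polynomial.C (q ^ x)).natDegree = 1 :=
    fun x _ => natDegree_X_sub_C _
  rw [Finset.sum_congr rfl h1, Finset.sum_const, Finset.card_range, smul_eq_mul, mul_one]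

lemma qPoch_coeff_top (q : ℂ) (m j : ℕ) : (qPochPoly q m j).coeff (m + j) = 1 := by
  have h := (qPoch_monic q m j).coeff_natDegree
  rwa [qPoch_natDegree] at h

lemma qPoch_eval (q x : ℂ) (m j : ℕ) :
    (qPochPoly q m j).eval x = x ^ m * ∏ i ∈ Finset.range j, (x - q ^ i) := by
  rw [qPochPoly, eval_mul, eval_pow, eval_X, eval_prod]
  simp

lemma qpow_ne (q : ℂ) (hq0 : q ≠ 0) (hq1 : ∀ k : ℕ, 0 < k → q ^ k ≠ 1)
    (i j : ℕ) (h : i < j) : q ^ j - q ^ i ≠ 0 := by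
  intro hc
  have h2 : q ^ j = q ^ i := sub_eq_zero.mp hc
  have h3 : q ^ (j - i) * q ^ i = 1 * q ^ i := by
    rw [one_mul, ← pow_add, show j - i + i = j by omega]; exact h2
  exact hq1 (j - i) (by omega) (mul_right_cancel₀ (pow_ne_zero i hq0) h3)

lemma qPoch_eval_ne (q : ℂ) (hq0 : q ≠ 0) (hq1 : ∀ k : ℕ, 0 < k → q ^ k ≠ 1)
    (m j : ℕ) : (qPochPoly q m j).eval (q ^ j) ≠ 0 := by
  rw [qPoch_eval]
  apply mul_ne_zero (pow_ne_zero _ (pow_ne_zero _ hq0))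
  exact Finset.prod_ne_zero_iff.mpr fun i hi =>
    qpow_ne q hq0 hq1 i j (Finset.mem_range.mp hi)

lemma qPoch_eval_zero (q : ℂ) (m j i : ℕ) (hij : i < j) :
    (qPochPoly q m j).eval (q ^ i) = 0 := by
  rw [qPoch_eval]
  apply mul_eq_zero_of_right
  exact Finset.prod_eq_zero (Finset.mem_range.mpr hij) (sub_self _)

lemma qPoch_succ (q : ℂ) (m j : ℕ) :
    qPochPoly q (m + 1) j = Polynomial.X * qPochPoly q m j := by
  rw [qPochPoly, qPochPoly, pow_succ', mul_assoc]

lemma qPoch_coeff_succ (q : ℂ) (m j t : ℕ) :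
    (qPochPoly q (m + 1) j).coeff (t + 1) = (qPochPoly q m j).coeff t := by
  rw [qPoch_succ, Polynomial.coeff_X_mul]

lemma qPoch_coeff_low (q : ℂ) (m j l : ℕ) (h : l < m) : (qPochPoly q m j).coeff l = 0 := by
  rw [qPochPoly, mul_comm, Polynomial.coeff_mul_X_pow']
  simp [Nat.not_le.mpr h]

lemma qPoch_eval_sum (q x : ℂ) (m j : ℕ) :
    (qPochPoly q m j).eval x = ∑ l ∈ Finset.Icc m (m + j), (qPochPoly q m j).coeff l * x ^ l := by
  rw [eval_eq_sum_range' (show (qPochPoly q m j).natDegree < m + j + 1 by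
    rw [qPoch_natDegree]; omega)]
  refine (Finset.sum_subset ?_ ?_).symm
  · intro l hl; simp only [Finset.mem_Icc] at hl; simp; omega
  · intro l hlr hl
    have hlr' := Finset.mem_range.mp hlr
    simp only [Finset.mem_Icc, not_and, not_le] at hl
    rcases lt_or_ge l m with h | h
    · rw [qPoch_coeff_low q m j l h, zero_mul]
    · exact absurd (hl h) (by omega)


theorem stmt_8 (q : ℂ) (hq0 : q ≠ 0) (hq1 : ∀ k : ℕ, 0 < k → q ^ k ≠ 1)
    (p : PowerSeries ℂ) (hp0 : constantCoeff p = 0) (hp1 : coeff 1 p = q)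
    (n j : ℕ) (hj : 1 ≤ j) (hn : j + 1 ≤ n) :
    coeff j (psIter p n) =
      ((qPochPoly q (n - j) j).eval (q ^ j) / (qPochPoly q (n - j) j).coeff n) *
        ((∑ l ∈ Finset.Icc (n - j - 1) (n - 1),
            ((qPochPoly q (n - j - 1) j).coeff l / (qPochPoly q (n - j - 1) j).eval (q ^ j)) *
              coeff j (psIter p l)) -
          (∑ l ∈ Finset.Icc (n - j) (n - 1),
            ((qPochPoly q (n - j) j).coeff l / (qPochPoly q (n - j) j).eval (q ^ j)) *
              coeff j (psIter p l))) := by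
  obtain ⟨j', rfl⟩ : ∃ j', j = j' + 1 := ⟨j - 1, by omega⟩
  obtain ⟨m', rfl⟩ : ∃ m', n = m' + (j' + 1) + 1 := ⟨n - j' - 2, by omega⟩
  set j := j' + 1 with hjdef
  set n := m' + j + 1 with hndef
  have e1 : n - j = m' + 1 := by omega
  have e2 : n - j - 1 = m' := by omega
  have e3 : n - 1 = m' + j := by omega
  rw [e2, e1, e3]
  -- basic facts
  have he' : (qPochPoly q m' j).eval (q ^ j) ≠ 0 := qPoch_eval_ne q hq0 hq1 m' j
  have heq : (qPochPoly q (m' + 1) j).eval (q ^ j) = q ^ j * (qPochPoly q m' j).eval (q ^ j) := by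
    rw [qPoch_succ, eval_mul, eval_X]
  have he : (qPochPoly q (m' + 1) j).eval (q ^ j) ≠ 0 := qPoch_eval_ne q hq0 hq1 (m' + 1) j
  have hPc : (qPochPoly q (m' + 1) j).coeff n = 1 := by
    rw [show n = m' + 1 + j by omega]; exact qPoch_coeff_top q (m' + 1) j
  rw [hPc, div_one]
  -- exponential form of the coefficients
  obtain ⟨Q, hQdvd, hQdeg, hQeval⟩ := exists_poly q hq0 hq1 p hp0 hp1 j
  have ha : ∀ N : ℕ, coeff j (psIter p N) =
      ∑ i ∈ Finset.Icc 1 j, Q.coeff i * (q ^ i) ^ N := by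
    intro N
    rw [hQeval N, eval_eq_sum_range' (lt_of_le_of_lt hQdeg (Nat.lt_succ_self j))]
    have hpow : ∀ i, Q.coeff i * (q ^ N) ^ i = Q.coeff i * (q ^ i) ^ N := by
      intro i; ring
    rw [Finset.sum_congr rfl fun i _ => hpow i]
    refine (Finset.sum_subset ?_ ?_).symm
    · intro i hi; simp only [Finset.mem_Icc] at hi; simp; omega
    · intro i hir hi
      simp only [Finset.mem_range] at hir
      simp only [Finset.mem_Icc, not_and, not_le] at hi
      have : i = 0 := by omega
      rw [this, Polynomial.X_dvd_iff.mp hQdvd, zero_mul]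
  -- clear denominators
  have hS1 : (qPochPoly q (m' + 1) j).eval (q ^ j) *
      ∑ l ∈ Finset.Icc m' (m' + j),
        ((qPochPoly q m' j).coeff l / (qPochPoly q m' j).eval (q ^ j)) * coeff j (psIter p l)
      = ∑ l ∈ Finset.Icc m' (m' + j),
          (q ^ j * (qPochPoly q m' j).coeff l) * coeff j (psIter p l) := by
    rw [Finset.mul_sum]
    refine Finset.sum_congr rfl fun l _ => ?_
    rw [heq]
    field_simp
  have hS2 : (qPochPoly q (m' + 1) j).eval (q ^ j) *
      ∑ l ∈ Finset.Icc (m' + 1) (m' + j),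
        ((qPochPoly q (m' + 1) j).coeff l / (qPochPoly q (m' + 1) j).eval (q ^ j)) *
          coeff j (psIter p l)
      = ∑ l ∈ Finset.Icc (m' + 1) (m' + j),
          (qPochPoly q (m' + 1) j).coeff l * coeff j (psIter p l) := by
    rw [Finset.mul_sum]
    refine Finset.sum_congr rfl fun l _ => ?_
    field_simp
  rw [mul_sub, hS1, hS2]
  -- reindex the second sum
  have hre : ∑ l ∈ Finset.Icc (m' + 1) (m' + j),
      (qPochPoly q (m' + 1) j).coeff l * coeff j (psIter p l)
      = ∑ l ∈ Finset.Icc m' (m' + j'),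
          (qPochPoly q m' j).coeff l * coeff j (psIter p (l + 1)) := by
    rw [show m' + j = (m' + j') + 1 by omega, ← Finset.map_add_right_Icc, Finset.sum_map]
    refine Finset.sum_congr rfl fun l _ => ?_
    simp only [addRightEmbedding_apply]
    rw [qPoch_coeff_succ]
  rw [hre]
  -- substitute the exponential form and swap sums
  have hswap : ∀ (s : Finset ℕ) (c : ℕ → ℂ) (e : ℕ → ℕ),
      ∑ l ∈ s, c l * coeff j (psIter p (e l))
      = ∑ i ∈ Finset.Icc 1 j, ∑ l ∈ s, c l * (Q.coeff i * (q ^ i) ^ (e l)) := by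
    intro s c e
    rw [Finset.sum_comm]
    refine Finset.sum_congr rfl fun l _ => ?_
    rw [ha (e l), Finset.mul_sum]
  rw [ha n, hswap _ _ (fun l => l), hswap _ _ (fun l => l + 1), ← Finset.sum_sub_distrib]
  refine Finset.sum_congr rfl fun i hi => ?_
  obtain ⟨hi1, hi2⟩ := Finset.mem_Icc.mp hi
  -- per-exponent identity
  have hV : ∑ l ∈ Finset.Icc m' (m' + j), (qPochPoly q m' j).coeff l * (q ^ i) ^ l
      = (qPochPoly q m' j).eval (q ^ i) := (qPoch_eval_sum q (q ^ i) m' j).symm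
  have htop : ∑ l ∈ Finset.Icc m' (m' + j), (qPochPoly q m' j).coeff l * (q ^ i) ^ l
      = (∑ l ∈ Finset.Icc m' (m' + j'), (qPochPoly q m' j).coeff l * (q ^ i) ^ l)
        + (q ^ i) ^ (m' + j) := by
    rw [show m' + j = (m' + j') + 1 by omega,
      Finset.sum_Icc_succ_top (by omega : m' ≤ m' + j' + 1)]
    rw [show m' + j' + 1 = m' + j by omega, qPoch_coeff_top q m' j, one_mul]
  have hW : ∑ l ∈ Finset.Icc m' (m' + j'), (qPochPoly q m' j).coeff l * (q ^ i) ^ l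
      = (qPochPoly q m' j).eval (q ^ i) - (q ^ i) ^ (m' + j) :=
    eq_sub_of_add_eq (htop.symm.trans hV)
  have h1 : ∑ l ∈ Finset.Icc m' (m' + j),
        q ^ j * (qPochPoly q m' j).coeff l * (Q.coeff i * (q ^ i) ^ l)
      = q ^ j * Q.coeff i * ((qPochPoly q m' j).eval (q ^ i)) := by
    rw [← hV, Finset.mul_sum]
    exact Finset.sum_congr rfl fun l _ => by ring
  have h2 : ∑ l ∈ Finset.Icc m' (m' + j'),
        (qPochPoly q m' j).coeff l * (Q.coeff i * (q ^ i) ^ (l + 1))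
      = q ^ i * Q.coeff i *
          (∑ l ∈ Finset.Icc m' (m' + j'), (qPochPoly q m' j).coeff l * (q ^ i) ^ l) := by
    rw [Finset.mul_sum]
    exact Finset.sum_congr rfl fun l _ => by ring
  rw [h1, h2, hW]
  rcases eq_or_lt_of_le hi2 with rfl | hlt
  · rw [hndef, pow_succ]
    ring
  · have hV0 : (qPochPoly q m' j).eval (q ^ i) = 0 := qPoch_eval_zero q m' j i hlt
    rw [hV0, hndef, pow_succ]
    ring
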